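/- arXiv:1605.01492 — 2 statements merged into one kernel-verified Lean document; each statement's English description precedes it below -/
import Mathlib

section
/- Let ℓ_1, ..., ℓ_k be k general lines in P^{2k-1} spanning P^{2k-1}, and q a general point. Then the number of (k-1)-planes in P^{2k-1} containing q and meeting all of ℓ_1, ..., ℓ_k is finite and nonzero. -/
namespace SchubertAux

open MvPolynomial Matrix

variable {𝕜 : Type*} [Field 𝕜] {k : ℕ}

/-- index equivalence -/
def eqv (k : ℕ) : Fin k × Fin 2 ≃ Fin (2 * k) :=
  finProdFinEquiv.trans (finCongr (mul_comm k 2))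

variable (𝕜 k) in
/-- generic matrix of the line configuration -/
noncomputable def Mgen :
    Matrix (Fin k × Fin 2) (Fin k × Fin 2)
      (MvPolynomial ((Fin k × Fin 2 × Fin (2 * k)) ⊕ Fin (2 * k)) 𝕜) :=
  Matrix.of fun p p' => X (Sum.inl (p.1, p.2, eqv k p'))

variable (𝕜) in
/-- generic matrix with row `(i,0)` replaced by the point `q` -/
noncomputable def Ngen (i : Fin k) :
    Matrix (Fin k × Fin 2) (Fin k × Fin 2)
      (MvPolynomial ((Fin k × Fin 2 × Fin (2 * k)) ⊕ Fin (2 * k)) 𝕜) :=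
  Matrix.of fun p p' =>
    if p = (i, 0) then X (Sum.inr (eqv k p')) else X (Sum.inl (p.1, p.2, eqv k p'))

lemma Mgen_det_ne_zero : (Mgen 𝕜 k).det ≠ 0 := by
  intro h0
  have h1 : ((Mgen 𝕜 k).map (eval (Sum.elim
      (fun x : Fin k × Fin 2 × Fin (2*k) => if x.2.2 = eqv k (x.1, x.2.1) then 1 else 0)
      (0 : Fin (2*k) → 𝕜)))) = 1 := by
    ext p p'
    simp [Mgen, Matrix.one_apply, (eqv k).injective.eq_iff, eq_comm]
  have h2 := RingHom.map_det (eval (Sum.elim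
      (fun x : Fin k × Fin 2 × Fin (2*k) => if x.2.2 = eqv k (x.1, x.2.1) then 1 else 0)
      (0 : Fin (2*k) → 𝕜))) (Mgen 𝕜 k)
  rw [RingHom.mapMatrix_apply] at h2
  rw [h0, h1, map_zero, Matrix.det_one] at h2
  exact zero_ne_one h2

lemma Ngen_det_ne_zero (i : Fin k) : (Ngen 𝕜 i).det ≠ 0 := by
  intro h0
  set v : ((Fin k × Fin 2 × Fin (2 * k)) ⊕ Fin (2 * k)) → 𝕜 := Sum.elim
      (fun x : Fin k × Fin 2 × Fin (2*k) => if x.2.2 = eqv k (x.1, x.2.1) then 1 else 0)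
      (fun j => if j = eqv k (i, 0) then 1 else 0) with hv
  have h1 : ((Ngen 𝕜 i).map (eval v)) = 1 := by
    ext p p'
    by_cases hp : p = (i, (0 : Fin 2))
    · subst hp
      simp [Ngen, hv, Matrix.one_apply, (eqv k).injective.eq_iff, eq_comm]
    · simp [Ngen, hp, hv, Matrix.one_apply, (eqv k).injective.eq_iff, eq_comm]
  have h2 := RingHom.map_det (eval v) (Ngen 𝕜 i)
  rw [RingHom.mapMatrix_apply] at h2
  rw [h0, h1, map_zero, Matrix.det_one] at h2
  exact zero_ne_one h2

end SchubertAux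


/-- Schubert calculus in `G(k, 2k)`: for `k` general lines `ℓ_1, …, ℓ_k` spanning
`P^{2k-1}` and a general point `q`, the number of `(k-1)`-planes of `P^{2k-1}` containing
`q` and meeting all of `ℓ_1, …, ℓ_k` is finite and nonzero.  Lines are encoded as spans of
pairs of vectors `aᵢ, bᵢ` of `𝕜^(2k)`, `(k-1)`-planes as `k`-dimensional subspaces, and
genericity is expressed by the nonvanishing of some fixed nonzero polynomial in the
coordinates of the configuration `(a, b, q)`. -/
theorem schubert_planes_through_point_meeting_lines (𝕜 : Type*) [Field 𝕜] [IsAlgClosed 𝕜]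
    (k : ℕ) (hk : 1 ≤ k) :
    ∃ P : MvPolynomial ((Fin k × Fin 2 × Fin (2 * k)) ⊕ Fin (2 * k)) 𝕜, P ≠ 0 ∧
      ∀ (a b : Fin k → (Fin (2 * k) → 𝕜)) (q : Fin (2 * k) → 𝕜),
        MvPolynomial.eval
            (Sum.elim (fun x => if x.2.1 = 0 then a x.1 x.2.2 else b x.1 x.2.2) q) P ≠ 0 →
        (q ≠ 0 ∧ (∀ i, Module.finrank 𝕜 ↥(Submodule.span 𝕜 {a i, b i}) = 2) ∧
            (⨆ i, Submodule.span 𝕜 {a i, b i}) = ⊤) ∧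
          {W : Submodule 𝕜 (Fin (2 * k) → 𝕜) | Module.finrank 𝕜 W = k ∧ q ∈ W ∧
              ∀ i, W ⊓ Submodule.span 𝕜 {a i, b i} ≠ ⊥}.Finite ∧
          {W : Submodule 𝕜 (Fin (2 * k) → 𝕜) | Module.finrank 𝕜 W = k ∧ q ∈ W ∧
              ∀ i, W ⊓ Submodule.span 𝕜 {a i, b i} ≠ ⊥}.Nonempty := by
  classical
  have hkpos : 0 < k := hk
  haveI : Nonempty (Fin k) := ⟨⟨0, hkpos⟩⟩
  refine ⟨(SchubertAux.Mgen 𝕜 k).det * ∏ i, (SchubertAux.Ngen 𝕜 i).det,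
    mul_ne_zero SchubertAux.Mgen_det_ne_zero
      (Finset.prod_ne_zero_iff.2 fun i _ => SchubertAux.Ngen_det_ne_zero i), ?_⟩
  intro a b q hP
  set e := SchubertAux.eqv k with he_def
  set vab := Sum.elim (fun x : Fin k × Fin 2 × Fin (2*k) =>
      if x.2.1 = 0 then a x.1 x.2.2 else b x.1 x.2.2) q with hvab
  rw [map_mul] at hP
  have hMf := left_ne_zero_of_mul hP
  have hNf : ∀ i : Fin k, MvPolynomial.eval vab (SchubertAux.Ngen 𝕜 i).det ≠ 0 := by
    have h := right_ne_zero_of_mul hP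
    rw [map_prod] at h
    exact fun i => Finset.prod_ne_zero_iff.1 h i (Finset.mem_univ i)
  set f : Fin k × Fin 2 → (Fin (2*k) → 𝕜) := fun p => if p.2 = 0 then a p.1 else b p.1
    with hf_def
  have haf : ∀ i, f (i, 0) = a i := fun i => by simp [hf_def]
  have hbf : ∀ i, f (i, 1) = b i := fun i => by simp [hf_def]
  set A : Matrix (Fin k × Fin 2) (Fin k × Fin 2) 𝕜 := Matrix.of (fun p p' => f p (e p'))
    with hA_def
  have hmapM : (SchubertAux.Mgen 𝕜 k).map (MvPolynomial.eval vab) = A := by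
    ext p p'
    simp [SchubertAux.Mgen, hvab, hA_def, hf_def, he_def, ite_apply]
  have hAdet : A.det ≠ 0 := by
    intro h
    apply hMf
    rw [RingHom.map_det, RingHom.mapMatrix_apply, hmapM, h]
  have hrows : LinearIndependent 𝕜 (fun p => A p) :=
    Matrix.linearIndependent_rows_iff_isUnit.2
      ((Matrix.isUnit_iff_isUnit_det A).2 (isUnit_iff_ne_zero.2 hAdet))
  have hfind : LinearIndependent 𝕜 f := by
    have hcomp : (fun p => A p) = (LinearMap.funLeft 𝕜 𝕜 e) ∘ f := by
      funext p; rfl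
    exact LinearIndependent.of_comp _ (hcomp ▸ hrows)
  have hcard : Fintype.card (Fin k × Fin 2) = Module.finrank 𝕜 (Fin (2*k) → 𝕜) := by
    simp [mul_comm]
  let B := basisOfLinearIndependentOfCardEqFinrank hfind hcard
  have hB : ⇑B = f := coe_basisOfLinearIndependentOfCardEqFinrank hfind hcard
  set c : Fin k × Fin 2 → 𝕜 := fun p => B.repr q p with hc_def
  have hqsum : ∑ p, c p • f p = q := by rw [← hB]; exact B.sum_repr q
  have hc0 : ∀ i : Fin k, c (i, 0) ≠ 0 := by
    intro i
    have hrow : (fun p' => q (e p')) = ∑ p, c p • A p := by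
      funext p'
      rw [← hqsum]
      simp [Finset.sum_apply, hA_def]
    have hmapN : (SchubertAux.Ngen 𝕜 i).map (MvPolynomial.eval vab)
        = A.updateRow (i, 0) (∑ p, c p • A p) := by
      ext p p'
      by_cases hp : p = (i, (0:Fin 2))
      · subst hp
        rw [Matrix.updateRow_self, ← hrow]
        simp [SchubertAux.Ngen, hvab, he_def]
      · rw [Matrix.updateRow_ne hp]
        simp [SchubertAux.Ngen, hp, hvab, hA_def, hf_def, he_def, ite_apply]
    have hne := hNf i
    rw [RingHom.map_det, RingHom.mapMatrix_apply, hmapN, Matrix.det_updateRow_sum] at hne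
    intro h
    rw [h] at hne
    simp at hne
  -- key coefficient-extraction lemma
  have key : ∀ u w : Fin k → 𝕜,
      ∑ i, (u i • f (i, 0) + w i • f (i, 1)) = 0 → ∀ i, u i = 0 ∧ w i = 0 := by
    intro u w h i
    have hexp : ∑ p : Fin k × Fin 2, (if p.2 = 0 then u p.1 else w p.1) • f p
        = ∑ i, (u i • f (i, 0) + w i • f (i, 1)) := by
      rw [Fintype.sum_prod_type]
      refine Finset.sum_congr rfl fun j _ => ?_
      rw [Fin.sum_univ_two]
      simp
    have h0 := Fintype.linearIndependent_iff.1 hfind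
      (fun p => if p.2 = 0 then u p.1 else w p.1) (by rw [hexp, h])
    exact ⟨by simpa using h0 (i, 0), by simpa using h0 (i, 1)⟩
  set qv : Fin k → (Fin (2*k) → 𝕜) := fun i => c (i, 0) • a i + c (i, 1) • b i with hqv_def
  have hq' : ∑ i, qv i = q := by
    rw [← hqsum, Fintype.sum_prod_type]
    refine Finset.sum_congr rfl fun j _ => ?_
    rw [Fin.sum_univ_two]
    simp [hqv_def, hf_def]
  have hqvind : LinearIndependent 𝕜 qv := by
    rw [Fintype.linearIndependent_iff]
    intro g hg i
    have h0 : ∑ j, ((g j * c (j,0)) • f (j,0) + (g j * c (j,1)) • f (j,1)) = 0 := by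
      rw [← hg]
      refine Finset.sum_congr rfl fun j _ => ?_
      rw [haf, hbf, hqv_def]
      module
    have := (key _ _ h0 i).1
    exact (mul_eq_zero.1 this).resolve_right (hc0 i)
  have hq_ne : q ≠ 0 := by
    intro h
    exact hc0 ⟨0, hkpos⟩ (by simp [hc_def, h])
  have hrank2 : ∀ i, Module.finrank 𝕜 ↥(Submodule.span 𝕜 {a i, b i}) = 2 := by
    intro i
    have hind : LinearIndependent 𝕜 (fun cc : Fin 2 => f (i, cc)) :=
      hfind.comp (fun cc => (i, cc)) (fun x y h => by simpa using h)
    have hr : Set.range (fun cc : Fin 2 => f (i, cc)) = {a i, b i} := by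
      ext x
      simp [Set.range, Fin.exists_fin_two, haf, hbf, eq_comm]
    rw [← hr, finrank_span_eq_card hind, Fintype.card_fin]
  have hsupr : (⨆ i, Submodule.span 𝕜 {a i, b i}) = ⊤ := by
    apply le_antisymm le_top
    rw [← B.span_eq, hB, Submodule.span_le]
    rintro x ⟨p, rfl⟩
    obtain ⟨i, cc⟩ := p
    apply Submodule.mem_iSup_of_mem i
    by_cases hcc : cc = 0
    · rw [hcc, haf]; exact Submodule.subset_span (Set.mem_insert _ _)
    · have hcc1 : cc = 1 := by omega
      rw [hcc1, hbf]; exact Submodule.subset_span (Set.mem_insert_of_mem _ rfl)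
  -- the solution set is a singleton
  have hS : {W : Submodule 𝕜 (Fin (2 * k) → 𝕜) | Module.finrank 𝕜 W = k ∧ q ∈ W ∧
      ∀ i, W ⊓ Submodule.span 𝕜 {a i, b i} ≠ ⊥} = {Submodule.span 𝕜 (Set.range qv)} := by
    ext W
    simp only [Set.mem_setOf_eq, Set.mem_singleton_iff]
    constructor
    · rintro ⟨hWrank, hWq, hWmeet⟩
      choose v hv hvne using fun i => (Submodule.ne_bot_iff _).1 (hWmeet i)
      have hvW : ∀ i, v i ∈ W := fun i => (Submodule.mem_inf.1 (hv i)).1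
      choose α β hαβ using fun i => Submodule.mem_span_pair.1 (Submodule.mem_inf.1 (hv i)).2
      have hvind : LinearIndependent 𝕜 v := by
        rw [Fintype.linearIndependent_iff]
        intro g hg i
        have h0 : ∑ j, ((g j * α j) • f (j,0) + (g j * β j) • f (j,1)) = 0 := by
          rw [← hg]
          refine Finset.sum_congr rfl fun j _ => ?_
          rw [haf, hbf, ← hαβ j]
          module
        obtain ⟨h1, h2⟩ := key _ _ h0 i
        by_contra hgi
        apply hvne i
        have hα : α i = 0 := (mul_eq_zero.1 h1).resolve_left hgi
        have hβ : β i = 0 := (mul_eq_zero.1 h2).resolve_left hgi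
        rw [← hαβ i, hα, hβ, zero_smul, zero_smul, add_zero]
      have hspan : Submodule.span 𝕜 (Set.range v) = W := by
        apply Submodule.eq_of_le_of_finrank_le
          (Submodule.span_le.2 (by rintro x ⟨i, rfl⟩; exact hvW i))
        rw [finrank_span_eq_card hvind, Fintype.card_fin, hWrank]
      obtain ⟨d, hd⟩ := (Submodule.mem_span_range_iff_exists_fun 𝕜).1 (hspan ▸ hWq)
      have hzero : ∑ i, ((d i * α i - c (i,0)) • f (i,0) + (d i * β i - c (i,1)) • f (i,1))
          = 0 := by
        have e1 : ∀ i, (d i * α i - c (i,0)) • f (i,0) + (d i * β i - c (i,1)) • f (i,1)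
            = d i • v i - qv i := by
          intro i
          rw [haf, hbf, ← hαβ i, hqv_def]
          module
        rw [Finset.sum_congr rfl fun i _ => e1 i, Finset.sum_sub_distrib, hd, hq', sub_self]
      have hco := key _ _ hzero
      have hc0eq : ∀ i, d i * α i = c (i, 0) := fun i => sub_eq_zero.1 (hco i).1
      have hc1eq : ∀ i, d i * β i = c (i, 1) := fun i => sub_eq_zero.1 (hco i).2
      have hdne : ∀ i, d i ≠ 0 := by
        intro i hdi
        apply hc0 i
        rw [← hc0eq i, hdi, zero_mul]
      have hqv_eq : ∀ i, qv i = d i • v i := by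
        intro i
        simp only [hqv_def]
        rw [← hc0eq i, ← hc1eq i, ← hαβ i]
        module
      rw [← hspan]
      apply le_antisymm
      · rw [Submodule.span_le]
        rintro x ⟨i, rfl⟩
        have hx : v i = (d i)⁻¹ • qv i := by
          rw [hqv_eq i, smul_smul, inv_mul_cancel₀ (hdne i), one_smul]
        rw [hx]
        exact Submodule.smul_mem _ _ (Submodule.subset_span ⟨i, rfl⟩)
      · rw [Submodule.span_le]
        rintro x ⟨i, rfl⟩
        rw [hqv_eq i]
        exact Submodule.smul_mem _ _ (Submodule.subset_span ⟨i, rfl⟩)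
    · rintro rfl
      refine ⟨?_, ?_, ?_⟩
      · rw [finrank_span_eq_card hqvind, Fintype.card_fin]
      · rw [← hq']
        exact Submodule.sum_mem _ fun i _ => Submodule.subset_span ⟨i, rfl⟩
      · intro i
        rw [Submodule.ne_bot_iff]
        refine ⟨qv i, Submodule.mem_inf.2 ⟨Submodule.subset_span ⟨i, rfl⟩, ?_⟩,
          hqvind.ne_zero i⟩
        exact Submodule.mem_span_pair.2 ⟨c (i,0), c (i,1), rfl⟩
  refine ⟨⟨hq_ne, hrank2, hsupr⟩, ?_, ?_⟩
  · rw [hS]; exact Set.finite_singleton _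
  · rw [hS]; exact ⟨_, rfl⟩
end

section
/- Fix k lines ℓ_1, ..., ℓ_k spanning P^{2k-1} and three (k-1)-planes Λ_1, Λ_2, Λ_3 such that each ℓ_i meets each Λ_j in exactly one point and all these intersection points are distinct. Then there is a unique Segre variety X ≅ P^1 × P^{k-1} ⊂ P^{2k-1} containing ℓ_1, ..., ℓ_k, Λ_1, Λ_2, Λ_3, and the ℓ_i appear in X as lines of the ruling P^1 × {q_i}. -/
/-- The affine cone over the standard Segre variety `P^1 × P^{k-1} ⊂ P^{2k-1}`: the set of
decomposable vectors in `𝕜^(2k)` (coordinates indexed by `Fin 2 × Fin k`). -/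
def segreCone (𝕜 : Type*) [Field 𝕜] (k : ℕ) : Set (Fin 2 × Fin k → 𝕜) :=
  {x | ∃ (v : Fin 2 → 𝕜) (w : Fin k → 𝕜), x = fun q => v q.1 * w q.2}

/-- The linear embedding `v ↦ v ⊗ w` of `𝕜^2` into `𝕜^(2k)`, whose projectivization (for
`w ≠ 0`) is a ruling line `P^1 × {q}` of the standard Segre variety. -/
def rulingEmbed (𝕜 : Type*) [Field 𝕜] (k : ℕ) (w : Fin k → 𝕜) :
    (Fin 2 → 𝕜) →ₗ[𝕜] (Fin 2 × Fin k → 𝕜) where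
  toFun v := fun p => v p.1 * w p.2
  map_add' v v' := by funext p; simp [add_mul]
  map_smul' c v := by funext p; simp [mul_comm, mul_assoc, mul_left_comm]

/-!
On each line `ℓᵢ` pick `xᵢ ∈ Λ₁` and `yᵢ ∈ Λ₂` normalised so that `xᵢ + yᵢ ∈ Λ₃` (possible since
the three points `ℓᵢ ∩ Λⱼ` are distinct). As the lines span, the `xᵢ, yᵢ` form a basis; in these
coordinates `g₀` we have `ℓᵢ = P¹ × {eᵢ}` and `Λⱼ = {pⱼ} × P^{k-1}` for the frame
`p = (1:0), (0:1), (1:1)` of `P¹`, which gives existence.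

For uniqueness, let `g` present another such Segre variety and put `f = g⁻¹ ∘ g₀`. Then `f` maps
the ruling `P¹ × {eᵢ}` onto a ruling `P¹ × {qᵢ}`, via some `Aᵢ ∈ GL₂`, and each `{pⱼ} × P^{k-1}`
into the Segre cone. A decomposable sum `u ⊗ q + u' ⊗ q'` with `q, q'` independent forces
`u ∥ u'`, so `A₀⁻¹ Aᵢ` fixes the three frame points and is a scalar `αᵢ`. Hence `f = A₀ ⊗ B` with
`B eᵢ = αᵢ qᵢ`, and `f` preserves the Segre cone.
-/

open Module Function Submodule

def outerProduct (R : Type*) [CommSemiring R] (ι κ : Type*) :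
    (ι → R) →ₗ[R] (κ → R) →ₗ[R] (ι × κ → R) :=
  LinearMap.mk₂ R (fun v w p => v p.1 * w p.2)
    (fun _ _ _ => by funext; simp [add_mul]) (fun _ _ _ => by funext; simp [mul_assoc])
    (fun _ _ _ => by funext; simp [mul_add]) (fun _ _ _ => by funext; simp [mul_left_comm])

local notation:70 v:71 " ⊗ₒ " w:71 => outerProduct _ _ _ v w

section OuterProduct

variable {𝕜 ι κ : Type*} [Field 𝕜]

@[simp]
theorem outerProduct_apply (v : ι → 𝕜) (w : κ → 𝕜) (p : ι × κ) : (v ⊗ₒ w) p = v p.1 * w p.2 :=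
  rfl

theorem outerProduct_eq_zero_iff {v : ι → 𝕜} {w : κ → 𝕜} : (v ⊗ₒ w) = 0 ↔ v = 0 ∨ w = 0 := by
  refine ⟨fun h => ?_, ?_⟩
  · by_contra! hvw
    obtain ⟨a, ha⟩ := Function.ne_iff.1 hvw.1
    obtain ⟨m, hm⟩ := Function.ne_iff.1 hvw.2
    exact mul_ne_zero ha hm (congrFun h (a, m))
  · rintro (rfl | rfl) <;> simp

theorem outerProduct_injective {v : ι → 𝕜} (hv : v ≠ 0) : Injective (outerProduct 𝕜 ι κ v) :=
  (injective_iff_map_eq_zero _).2 fun _ h => (outerProduct_eq_zero_iff.1 h).resolve_left hv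

theorem outerProduct_flip_injective {w : κ → 𝕜} (hw : w ≠ 0) :
    Injective ((outerProduct 𝕜 ι κ).flip w) :=
  (injective_iff_map_eq_zero _).2 fun _ h => (outerProduct_eq_zero_iff.1 h).resolve_right hw

theorem exists_eq_smul_of_mul_eq_mul {u u' : ι → 𝕜} (hu : u ≠ 0)
    (h : ∀ a b, u a * u' b = u b * u' a) : ∃ c : 𝕜, u' = c • u := by
  obtain ⟨a, ha⟩ := Function.ne_iff.1 hu
  refine ⟨u' a / u a, funext fun b => ?_⟩
  rw [Pi.smul_apply, smul_eq_mul, div_mul_eq_mul_div, eq_div_iff ha]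
  linear_combination -h b a

theorem exists_linearMap_eq_outerProduct {M : Type*} [AddCommGroup M] [Module 𝕜 M]
    (φ : M →ₗ[𝕜] ι × κ → 𝕜) {q : κ → 𝕜} (hq : q ≠ 0) (h : ∀ x, ∃ u, φ x = u ⊗ₒ q) :
    ∃ A : M →ₗ[𝕜] ι → 𝕜, ∀ x, φ x = A x ⊗ₒ q := by
  obtain ⟨m, hm⟩ : ∃ m, q m ≠ 0 := Function.ne_iff.1 hq
  -- `u` is read off the column `m` of `u ⊗ q`.
  refine ⟨(q m)⁻¹ • LinearMap.funLeft 𝕜 𝕜 (fun a => (a, m)) ∘ₗ φ, fun x => ?_⟩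
  obtain ⟨u, hu⟩ := h x
  rw [hu]
  congr 2
  funext a
  simp only [LinearMap.smul_apply, LinearMap.comp_apply, Pi.smul_apply, LinearMap.funLeft_apply,
    hu, outerProduct_apply, smul_eq_mul]
  field_simp

end OuterProduct

section Segre

variable {𝕜 : Type*} [Field 𝕜] {k : ℕ}

theorem rulingEmbed_eq_flip (w : Fin k → 𝕜) :
    rulingEmbed 𝕜 k w = (outerProduct 𝕜 (Fin 2) (Fin k)).flip w :=
  rfl

theorem mul_eq_mul_of_mem_segreCone {x : Fin 2 × Fin k → 𝕜} (hx : x ∈ segreCone 𝕜 k)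
    (m m' : Fin k) :
    x (0, m) * x (1, m') = x (0, m') * x (1, m) := by
  obtain ⟨v, w, rfl⟩ := hx
  ring

theorem eq_smul_or_eq_smul_of_add_mem_segreCone {u u' : Fin 2 → 𝕜} {q q' : Fin k → 𝕜}
    (hu : u ≠ 0) (hq : q ≠ 0) (h : (u ⊗ₒ q) + (u' ⊗ₒ q') ∈ segreCone 𝕜 k) :
    (∃ c : 𝕜, u' = c • u) ∨ ∃ c : 𝕜, q' = c • q := by
  have hminor : ∀ m m', (u 0 * u' 1 - u 1 * u' 0) * (q m * q' m' - q m' * q' m) = 0 := by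
    intro m m'
    have := mul_eq_mul_of_mem_segreCone h m m'
    simp only [Pi.add_apply, outerProduct_apply] at this
    linear_combination this
  by_cases hdet : u 0 * u' 1 = u 1 * u' 0
  · left
    refine exists_eq_smul_of_mul_eq_mul hu fun a b => ?_
    fin_cases a <;> fin_cases b <;> first | rfl | exact hdet | exact hdet.symm
  · right
    refine exists_eq_smul_of_mul_eq_mul hq fun m m' => ?_
    exact sub_eq_zero.1 ((mul_eq_zero.1 (hminor m m')).resolve_left (sub_ne_zero.2 hdet))

end Segre

section Frame

variable (𝕜 : Type*) [Field 𝕜]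

def stdFrame : Fin 3 → Fin 2 → 𝕜 := ![Pi.single 0 1, Pi.single 1 1, 1]

variable {𝕜}

theorem stdFrame_ne_zero (j : Fin 3) : stdFrame 𝕜 j ≠ 0 := by
  fin_cases j <;> simp [stdFrame]

theorem stdFrame_two : stdFrame 𝕜 2 = stdFrame 𝕜 0 + stdFrame 𝕜 1 := by
  funext a
  fin_cases a <;> simp [stdFrame]

theorem exists_eq_smul_of_stdFrame {M : Type*} [AddCommGroup M] [Module 𝕜 M]
    {A A' : (Fin 2 → 𝕜) →ₗ[𝕜] M} (hA : Injective A)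
    (h : ∀ j, ∃ c : 𝕜, A' (stdFrame 𝕜 j) = c • A (stdFrame 𝕜 j)) : ∃ c : 𝕜, A' = c • A := by
  obtain ⟨c₀, h₀⟩ := h 0
  obtain ⟨c₁, h₁⟩ := h 1
  obtain ⟨c₂, h₂⟩ := h 2
  have hsum : A ((c₀ - c₂) • stdFrame 𝕜 0 + (c₁ - c₂) • stdFrame 𝕜 1) = 0 := by
    rw [stdFrame_two, map_add, map_add, h₀, h₁, smul_add, ← sub_eq_zero] at h₂
    rw [map_add, map_smul, map_smul, sub_smul, sub_smul, ← h₂]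
    abel
  have hc := (injective_iff_map_eq_zero A).1 hA _ hsum
  have e₀ : c₀ = c₂ := sub_eq_zero.1 (by simpa [stdFrame] using congrFun hc 0)
  have e₁ : c₁ = c₂ := sub_eq_zero.1 (by simpa [stdFrame] using congrFun hc 1)
  refine ⟨c₀, (Pi.basisFun 𝕜 (Fin 2)).ext fun a => ?_⟩
  fin_cases a
  · simpa [stdFrame] using h₀
  · simpa [stdFrame, e₀, e₁] using h₁

end Frame

section ProjectiveLine

variable {K V : Type*} [Field K] [AddCommGroup V] [Module K V]

theorem Submodule.eq_of_le_of_finrank_eq_one {p p' : Submodule K V} (hle : p ≤ p')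
    (hp : finrank K p = 1) (hp' : finrank K p' = 1) : p = p' :=
  have : FiniteDimensional K p' := Module.finite_of_finrank_eq_succ hp'
  Submodule.eq_of_le_of_finrank_eq hle (hp.trans hp'.symm)

theorem Submodule.span_singleton_eq_of_finrank_eq_one {p : Submodule K V} {z : V} (hz : z ∈ p)
    (hz0 : z ≠ 0) (hp : finrank K p = 1) : K ∙ z = p :=
  eq_of_le_of_finrank_eq_one ((span_singleton_le_iff_mem z p).2 hz) (finrank_span_singleton hz0) hp

theorem Submodule.sup_eq_of_finrank_eq_two {ℓ p p' : Submodule K V} (hℓ : finrank K ℓ = 2)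
    (hpℓ : p ≤ ℓ) (hp'ℓ : p' ≤ ℓ) (hp : finrank K p = 1) (hp' : finrank K p' = 1) (hne : p ≠ p') :
    p ⊔ p' = ℓ := by
  have : FiniteDimensional K ℓ := Module.finite_of_finrank_eq_succ hℓ
  have hlt : p < p ⊔ p' := lt_of_le_of_ne le_sup_left fun h =>
    hne (eq_of_le_of_finrank_eq_one (h ▸ le_sup_right) hp' hp).symm
  refine Submodule.eq_of_le_of_finrank_eq (sup_le hpℓ hp'ℓ) (le_antisymm ?_ ?_)
  · exact hℓ ▸ Submodule.finrank_mono (sup_le hpℓ hp'ℓ)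
  · have : FiniteDimensional K ↥(p ⊔ p') := Submodule.finiteDimensional_of_le (sup_le hpℓ hp'ℓ)
    have := Submodule.finrank_lt_finrank_of_lt hlt
    omega

theorem exists_add_mem_of_finrank_eq_two {ℓ : Submodule K V} {p : Fin 3 → Submodule K V}
    (hℓ : finrank K ℓ = 2) (hpℓ : ∀ j, p j ≤ ℓ) (hp : ∀ j, finrank K (p j) = 1)
    (hinj : Injective p) :
    ∃ x y, x ∈ p 0 ∧ y ∈ p 1 ∧ x + y ∈ p 2 ∧ span K {x, y} = ℓ := by
  obtain ⟨z, hz, hz0⟩ := Submodule.exists_mem_ne_zero_of_ne_bot <|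
    Submodule.nontrivial_iff_ne_bot.1 (Module.nontrivial_of_finrank_eq_succ (hp 2))
  have hsup := Submodule.sup_eq_of_finrank_eq_two hℓ (hpℓ 0) (hpℓ 1) (hp 0) (hp 1)
    (hinj.ne (by decide))
  obtain ⟨x, hx, y, hy, rfl⟩ := Submodule.mem_sup.1 (hsup ▸ hpℓ 2 hz)
  have hp2 : K ∙ (x + y) = p 2 := Submodule.span_singleton_eq_of_finrank_eq_one hz hz0 (hp 2)
  have hx0 : x ≠ 0 := by
    rintro rfl
    refine hinj.ne (show (2 : Fin 3) ≠ 1 by decide) ?_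
    rw [← hp2, zero_add]
    exact Submodule.span_singleton_eq_of_finrank_eq_one hy (by simpa using hz0) (hp 1)
  have hy0 : y ≠ 0 := by
    rintro rfl
    refine hinj.ne (show (2 : Fin 3) ≠ 0 by decide) ?_
    rw [← hp2, add_zero]
    exact Submodule.span_singleton_eq_of_finrank_eq_one hx (by simpa using hz0) (hp 0)
  refine ⟨x, y, hx, hy, hz, ?_⟩
  rw [Submodule.span_insert, Submodule.span_singleton_eq_of_finrank_eq_one hx hx0 (hp 0),
    Submodule.span_singleton_eq_of_finrank_eq_one hy hy0 (hp 1), hsup]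

end ProjectiveLine

section Existence

variable {𝕜 : Type*} [Field 𝕜] {k : ℕ}

theorem exists_linearEquiv_outerProduct_eq {V : Type*} [AddCommGroup V] [Module 𝕜 V]
    (hV : finrank 𝕜 V = 2 * k) (x y : Fin k → V) (hspan : ⨆ i, span 𝕜 {x i, y i} = ⊤) :
    ∃ g : (Fin 2 × Fin k → 𝕜) ≃ₗ[𝕜] V,
      ∀ v w, g (v ⊗ₒ w) = ∑ i, w i • (v 0 • x i + v 1 • y i) := by
  let E : Fin 2 × Fin k → V := fun p => ![x p.2, y p.2] p.1
  have hE : ⊤ ≤ span 𝕜 (Set.range E) := by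
    rw [← hspan]
    refine iSup_le fun i => span_le.2 ?_
    rintro _ (rfl | rfl)
    · exact subset_span ⟨(0, i), rfl⟩
    · exact subset_span ⟨(1, i), rfl⟩
  let b := basisOfTopLeSpanOfCardEqFinrank E hE (by simp [hV])
  refine ⟨b.equivFun.symm, fun v w => ?_⟩
  rw [Basis.equivFun_symm_apply, coe_basisOfTopLeSpanOfCardEqFinrank, Fintype.sum_prod_type_right]
  refine Finset.sum_congr rfl fun i _ => ?_
  simp [E, Fin.sum_univ_two, smul_add, smul_smul, mul_comm]

theorem exists_linearEquiv_map_rulings_columns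
    {ℓ : Fin k → Submodule 𝕜 (Fin 2 × Fin k → 𝕜)} {Λ : Fin 3 → Submodule 𝕜 (Fin 2 × Fin k → 𝕜)}
    (hℓ : ∀ i, finrank 𝕜 (ℓ i) = 2) (hΛ : ∀ j, finrank 𝕜 (Λ j) = k) (hspan : ⨆ i, ℓ i = ⊤)
    (hmeet : ∀ i j, finrank 𝕜 ↥(ℓ i ⊓ Λ j) = 1)
    (hdistinct : Injective fun p : Fin k × Fin 3 => ℓ p.1 ⊓ Λ p.2) :
    ∃ g : (Fin 2 × Fin k → 𝕜) ≃ₗ[𝕜] (Fin 2 × Fin k → 𝕜),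
      (∀ i, map g.toLinearMap (LinearMap.range (rulingEmbed 𝕜 k (Pi.single i 1))) = ℓ i) ∧
      ∀ j, map g.toLinearMap (LinearMap.range (outerProduct 𝕜 (Fin 2) (Fin k) (stdFrame 𝕜 j))) =
        Λ j := by
  have hline (i : Fin k) : ∃ x y, x ∈ ℓ i ⊓ Λ 0 ∧ y ∈ ℓ i ⊓ Λ 1 ∧ x + y ∈ ℓ i ⊓ Λ 2 ∧
      span 𝕜 {x, y} = ℓ i :=
    exists_add_mem_of_finrank_eq_two (hℓ i) (fun _ => inf_le_left) (hmeet i)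
      fun j j' h => congrArg Prod.snd (hdistinct (a₁ := (i, j)) (a₂ := (i, j')) h)
  choose x y hx hy hxy hxyℓ using hline
  obtain ⟨g, hg⟩ := exists_linearEquiv_outerProduct_eq (𝕜 := 𝕜) (by simp) x y
    (by simp only [hxyℓ]; exact hspan)
  have hframe (i : Fin k) (j : Fin 3) : stdFrame 𝕜 j 0 • x i + stdFrame 𝕜 j 1 • y i ∈ Λ j := by
    fin_cases j <;>
      simp [stdFrame, (mem_inf.1 (hx i)).2, (mem_inf.1 (hy i)).2, (mem_inf.1 (hxy i)).2]
  refine ⟨g, fun i => eq_of_le_of_finrank_eq ?_ ?_, fun j => eq_of_le_of_finrank_eq ?_ ?_⟩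
  · rintro _ ⟨_, ⟨v, rfl⟩, rfl⟩
    rw [← hxyℓ i, mem_span_pair]
    exact ⟨v 0, v 1, by simp [rulingEmbed_eq_flip, hg, Pi.single_apply, Finset.sum_add_distrib]⟩
  · rw [LinearEquiv.finrank_map_eq, rulingEmbed_eq_flip, LinearMap.finrank_range_of_inj
      (outerProduct_flip_injective (Pi.single_ne_zero_iff.2 one_ne_zero)), hℓ i, finrank_fin_fun]
  · rintro _ ⟨_, ⟨w, rfl⟩, rfl⟩
    simp only [LinearEquiv.coe_coe, hg]
    exact sum_mem fun i _ => smul_mem _ _ (hframe i j)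
  · rw [LinearEquiv.finrank_map_eq, LinearMap.finrank_range_of_inj
      (outerProduct_injective (stdFrame_ne_zero j)), hΛ j, finrank_fin_fun]

end Existence

section Uniqueness

variable {𝕜 : Type*} [Field 𝕜] {k : ℕ}

theorem image_segreCone_eq_of_apply_outerProduct [NeZero k]
    (f : (Fin 2 × Fin k → 𝕜) ≃ₗ[𝕜] (Fin 2 × Fin k → 𝕜))
    (A : (Fin 2 → 𝕜) →ₗ[𝕜] Fin 2 → 𝕜) (B : (Fin k → 𝕜) →ₗ[𝕜] Fin k → 𝕜)
    (hf : ∀ v w, f (v ⊗ₒ w) = A v ⊗ₒ B w) : f '' segreCone 𝕜 k = segreCone 𝕜 k := by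
  have hA : Surjective A := LinearMap.injective_iff_surjective.1 <|
    (injective_iff_map_eq_zero A).2 fun v hv => by
      have : v ⊗ₒ (1 : Fin k → 𝕜) = 0 := f.map_eq_zero_iff.1 (by simp [hf, hv])
      exact (outerProduct_eq_zero_iff.1 this).resolve_right one_ne_zero
  have hB : Surjective B := LinearMap.injective_iff_surjective.1 <|
    (injective_iff_map_eq_zero B).2 fun w hw => by
      have : (1 : Fin 2 → 𝕜) ⊗ₒ w = 0 := f.map_eq_zero_iff.1 (by simp [hf, hw])
      exact (outerProduct_eq_zero_iff.1 this).resolve_left one_ne_zero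
  ext x
  constructor
  · rintro ⟨_, ⟨v, w, rfl⟩, rfl⟩
    exact ⟨A v, B w, hf v w⟩
  · rintro ⟨v, w, rfl⟩
    obtain ⟨v', rfl⟩ := hA v
    obtain ⟨w', rfl⟩ := hB w
    exact ⟨v' ⊗ₒ w', ⟨v', w', rfl⟩, hf v' w'⟩

theorem ne_smul_of_apply_outerProduct_single (f : (Fin 2 × Fin k → 𝕜) ≃ₗ[𝕜] (Fin 2 × Fin k → 𝕜))
    {A : Fin k → (Fin 2 → 𝕜) →ₗ[𝕜] Fin 2 → 𝕜} {q : Fin k → Fin k → 𝕜}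
    (hA : ∀ i v, f (v ⊗ₒ Pi.single i 1) = A i v ⊗ₒ q i) (hAinj : ∀ i, Injective (A i))
    {i i' : Fin k} (hii' : i ≠ i') (c : 𝕜) : q i' ≠ c • q i := by
  intro hc
  obtain ⟨v, hv⟩ := LinearMap.injective_iff_surjective.1 (hAinj i) (c • A i' (Pi.single 0 1))
  have h : v ⊗ₒ Pi.single i 1 = Pi.single 0 1 ⊗ₒ Pi.single i' 1 :=
    f.injective (by rw [hA, hA, hv, hc, map_smul, map_smul, LinearMap.smul_apply])
  simpa [hii'] using congrFun h (0, i')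

theorem image_segreCone_eq_of_rulings_columns [NeZero k]
    (f : (Fin 2 × Fin k → 𝕜) ≃ₗ[𝕜] (Fin 2 × Fin k → 𝕜)) {q : Fin k → Fin k → 𝕜}
    (hq : ∀ i, q i ≠ 0) (hrul : ∀ i v, ∃ u, f (v ⊗ₒ Pi.single i 1) = u ⊗ₒ q i)
    (hcol : ∀ j w, f (stdFrame 𝕜 j ⊗ₒ w) ∈ segreCone 𝕜 k) :
    f '' segreCone 𝕜 k = segreCone 𝕜 k := by
  choose A hA using fun i => exists_linearMap_eq_outerProduct
    (f.toLinearMap ∘ₗ (outerProduct 𝕜 (Fin 2) (Fin k)).flip (Pi.single i 1)) (hq i) (hrul i)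
  replace hA : ∀ i v, f (v ⊗ₒ Pi.single i 1) = A i v ⊗ₒ q i := hA
  have hAinj (i : Fin k) : Injective (A i) := (injective_iff_map_eq_zero _).2 fun v hv => by
    have : v ⊗ₒ Pi.single i 1 = 0 := f.map_eq_zero_iff.1 (by simp [hA, hv])
    exact (outerProduct_eq_zero_iff.1 this).resolve_right (Pi.single_ne_zero_iff.2 one_ne_zero)
  have hscalar (i : Fin k) : ∃ c : 𝕜, A i = c • A 0 := by
    rcases eq_or_ne i 0 with rfl | hi
    · exact ⟨1, (one_smul _ _).symm⟩
    refine exists_eq_smul_of_stdFrame (hAinj 0) fun j => ?_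
    have hmem := hcol j (Pi.single 0 1 + Pi.single i 1)
    rw [map_add, map_add, hA, hA] at hmem
    exact (eq_smul_or_eq_smul_of_add_mem_segreCone
      ((map_ne_zero_iff _ (hAinj 0)).2 (stdFrame_ne_zero j)) (hq 0) hmem).resolve_right
      fun ⟨c, hc⟩ => ne_smul_of_apply_outerProduct_single f hA hAinj hi.symm c hc
  choose α hα using hscalar
  refine image_segreCone_eq_of_apply_outerProduct f (A 0)
    (Fintype.linearCombination 𝕜 fun i => α i • q i) fun v => LinearMap.congr_fun (?_ :
      f.toLinearMap ∘ₗ outerProduct 𝕜 _ _ v = outerProduct 𝕜 _ _ (A 0 v) ∘ₗ _)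
  refine (Pi.basisFun 𝕜 (Fin k)).ext fun i => ?_
  simp only [LinearMap.comp_apply, LinearEquiv.coe_coe, Pi.basisFun_apply, hA,
    Fintype.linearCombination_apply_single, one_smul]
  rw [hα i, LinearMap.smul_apply, map_smul, map_smul, LinearMap.smul_apply]

end Uniqueness

theorem unique_segre_through_lines_and_planes_general (𝕜 : Type*) [Field 𝕜]
    (k : ℕ) (hk : 1 ≤ k)
    (ℓ : Fin k → Submodule 𝕜 (Fin 2 × Fin k → 𝕜))
    (Λ : Fin 3 → Submodule 𝕜 (Fin 2 × Fin k → 𝕜))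
    (hℓ : ∀ i, Module.finrank 𝕜 (ℓ i) = 2)
    (hΛ : ∀ j, Module.finrank 𝕜 (Λ j) = k)
    (hspan : ⨆ i, ℓ i = ⊤)
    (hmeet : ∀ i j, Module.finrank 𝕜 ↥(ℓ i ⊓ Λ j) = 1)
    (hdistinct : Function.Injective fun p : Fin k × Fin 3 => ℓ p.1 ⊓ Λ p.2) :
    ∃! X : Set (Fin 2 × Fin k → 𝕜),
      ∃ g : (Fin 2 × Fin k → 𝕜) ≃ₗ[𝕜] (Fin 2 × Fin k → 𝕜),
        X = g '' segreCone 𝕜 k ∧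
        (∀ i, (ℓ i : Set (Fin 2 × Fin k → 𝕜)) ⊆ X) ∧
        (∀ j, (Λ j : Set (Fin 2 × Fin k → 𝕜)) ⊆ X) ∧
        (∀ i, ∃ q : Fin k → 𝕜, q ≠ 0 ∧
          ℓ i = Submodule.map (g : (Fin 2 × Fin k → 𝕜) →ₗ[𝕜] (Fin 2 × Fin k → 𝕜))
            (LinearMap.range (rulingEmbed 𝕜 k q))) := by
  have : NeZero k := ⟨by omega⟩
  obtain ⟨g₀, hℓg₀, hΛg₀⟩ := exists_linearEquiv_map_rulings_columns hℓ hΛ hspan hmeet hdistinct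
  refine ⟨g₀ '' segreCone 𝕜 k, ⟨g₀, rfl, fun i => ?_, fun j => ?_,
    fun i => ⟨_, Pi.single_ne_zero_iff.2 one_ne_zero, (hℓg₀ i).symm⟩⟩, ?_⟩
  · rw [← hℓg₀ i]
    rintro _ ⟨_, ⟨v, rfl⟩, rfl⟩
    exact ⟨_, ⟨v, _, rfl⟩, rfl⟩
  · rw [← hΛg₀ j]
    rintro _ ⟨_, ⟨w, rfl⟩, rfl⟩
    exact ⟨_, ⟨_, w, rfl⟩, rfl⟩
  rintro _ ⟨g, rfl, -, hΛg, hrul⟩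
  choose q hq0 hq using hrul
  have hf := image_segreCone_eq_of_rulings_columns (g₀.trans g.symm) hq0
    (fun i v => ?_) (fun j w => ?_)
  · conv_lhs => rw [← hf, Set.image_image]
    simp
  · have hmem : g₀ (v ⊗ₒ Pi.single i 1) ∈ ℓ i := hℓg₀ i ▸ mem_map_of_mem ⟨v, rfl⟩
    rw [hq i, map_equiv_eq_comap_symm] at hmem
    obtain ⟨u, hu⟩ := hmem
    exact ⟨u, hu.symm⟩
  · have hmem : g₀ (stdFrame 𝕜 j ⊗ₒ w) ∈ Λ j := hΛg₀ j ▸ mem_map_of_mem ⟨w, rfl⟩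
    simpa [LinearEquiv.image_eq_preimage_symm] using hΛg j hmem

/-- Fix `k` lines `ℓ_1, …, ℓ_k` spanning `P^{2k-1}` and three `(k-1)`-planes
`Λ_1, Λ_2, Λ_3` such that each `ℓᵢ` meets each `Λⱼ` in exactly one point and all these
intersection points are distinct.  Then there is a unique Segre variety
`X ≅ P^1 × P^{k-1} ⊂ P^{2k-1}` (a translate of the standard Segre variety by a linear
automorphism `g` of `𝕜^(2k)`) containing all the `ℓᵢ` and `Λⱼ`, and in it the `ℓᵢ` appear
as ruling lines `P^1 × {qᵢ}`.  Lines and `(k-1)`-planes of `P^{2k-1}` are encoded as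
subspaces of `𝕜^(2k)` of dimension `2` and `k` respectively. -/
theorem unique_segre_through_lines_and_planes (𝕜 : Type*) [Field 𝕜] [IsAlgClosed 𝕜]
    (k : ℕ) (hk : 1 ≤ k)
    (ℓ : Fin k → Submodule 𝕜 (Fin 2 × Fin k → 𝕜))
    (Λ : Fin 3 → Submodule 𝕜 (Fin 2 × Fin k → 𝕜))
    (hℓ : ∀ i, Module.finrank 𝕜 (ℓ i) = 2)
    (hΛ : ∀ j, Module.finrank 𝕜 (Λ j) = k)
    (hspan : ⨆ i, ℓ i = ⊤)
    (hmeet : ∀ i j, Module.finrank 𝕜 ↥(ℓ i ⊓ Λ j) = 1)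
    (hdistinct : Function.Injective fun p : Fin k × Fin 3 => ℓ p.1 ⊓ Λ p.2) :
    ∃! X : Set (Fin 2 × Fin k → 𝕜),
      ∃ g : (Fin 2 × Fin k → 𝕜) ≃ₗ[𝕜] (Fin 2 × Fin k → 𝕜),
        X = g '' segreCone 𝕜 k ∧
        (∀ i, (ℓ i : Set (Fin 2 × Fin k → 𝕜)) ⊆ X) ∧
        (∀ j, (Λ j : Set (Fin 2 × Fin k → 𝕜)) ⊆ X) ∧
        (∀ i, ∃ q : Fin k → 𝕜, q ≠ 0 ∧
          ℓ i = Submodule.map (g : (Fin 2 × Fin k → 𝕜) →ₗ[𝕜] (Fin 2 × Fin k → 𝕜))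
            (LinearMap.range (rulingEmbed 𝕜 k q))) :=
  unique_segre_through_lines_and_planes_general 𝕜 k hk ℓ Λ hℓ hΛ hspan hmeet hdistinct
end
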